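/- arXiv:1701.07421 — 2 statements merged into one kernel-verified Lean document; each statement's English description precedes it below -/
import Mathlib

section
/- If {e₁,...,eₙ} is a Q-orthogonal basis of V, then the set {1} ∪ {e_I : I a nonempty strictly increasing multi-index} is a basis of Cl(V,Q) which is orthogonal with respect to the bilinear form Q̄(x,y) = p(x·c(y)), and Q̄(x,x) ≠ 0 for each basis element x; consequently dim Cl(V,Q) = 2ⁿ and Q̄ is symmetric and nondegenerate. -/
open CliffordAlgebra

section Defs

variable {F V : Type*} [Field F] [AddCommGroup V] [Module F V]

/-- The monomial `e_I` associated to a multi-index `I`, realized as a finite set of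
indices multiplied in increasing order (with `e_∅ = 1`). -/
noncomputable def eI (Qf : QuadraticForm F V) {n : ℕ} (b : Module.Basis (Fin n) F V)
    (s : Finset (Fin n)) : CliffordAlgebra Qf :=
  ((s.sort (· ≤ ·)).map fun i => ι Qf (b i)).prod

/-- The conjugation anti-automorphism `c = α ∘ τ` of the Clifford algebra. -/
noncomputable def cconj (Qf : QuadraticForm F V) :
    CliffordAlgebra Qf →ₗ[F] CliffordAlgebra Qf :=
  involute.toLinearMap ∘ₗ (reverse (Q := Qf))

/-- The canonical bilinear form `Q̄(x,y) = p(x · c(y))`, where `p` is the scalar-component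
projection determined by a monomial basis `bas` (indexed by multi-indices, with
`bas s = e_s`, in particular `bas ∅ = 1`). -/
noncomputable def Qbar {Qf : QuadraticForm F V} {n : ℕ}
    (bas : Module.Basis (Finset (Fin n)) F (CliffordAlgebra Qf))
    (x y : CliffordAlgebra Qf) : F :=
  bas.coord ∅ (x * cconj Qf y)

/-- The Lie algebra `G = {ξ : c(ξ) = -ξ}` of infinitesimal isometries, as a submodule. -/
noncomputable def Gsub (Qf : QuadraticForm F V) : Submodule F (CliffordAlgebra Qf) :=
  LinearMap.ker (cconj Qf + LinearMap.id)

end Defs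

/-! The generators `ι (b i)` anticommute and square to the scalars `Q (b i)`, so reordering a
product of generators only costs a scalar: `e_s * e_t ∈ F ∙ e_{s ∆ t}` and `c (e_t) ∈ F ∙ e_t`.
Hence the `2 ^ n` monomials span `Cl(V,Q)`, which has dimension `2 ^ n` because it is isomorphic,
as a module, to the exterior algebra in characteristic `≠ 2`; so they form a basis. Then
`Q̄(e_s, e_t)` is the scalar part of a multiple of `e_{s ∆ t}`, which vanishes for `s ≠ t`, while
`e_s * reverse (e_s)` telescopes to `∏ i ∈ s, Q (b i)`, so `Q̄(e_s, e_s) = ± ∏ i ∈ s, Q (b i) ≠ 0`.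
A form with such an orthogonal basis is symmetric and nondegenerate. -/

open scoped symmDiff

theorem Finset.singleton_symmDiff_of_notMem {ι : Type*} [DecidableEq ι] {i : ι} {s : Finset ι}
    (h : i ∉ s) : {i} ∆ s = insert i s := by
  rw [Finset.symmDiff_eq_union (Finset.disjoint_singleton_left.2 h), Finset.insert_eq]

theorem Finset.perm_sort_insert {ι : Type*} [LinearOrder ι] {i : ι} {s : Finset ι} (h : i ∉ s) :
    (i :: s.sort (· ≤ ·)).Perm ((insert i s).sort (· ≤ ·)) := by
  refine List.perm_of_nodup_nodup_toFinset_eq ?_ (Finset.sort_nodup _ _) ?_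
  · exact List.nodup_cons.2 ⟨by simpa using h, Finset.sort_nodup _ _⟩
  · simp

namespace AnticommutingFamily

variable {R A ι : Type*} [CommRing R] [Ring A] [Algebra R A] {f : ι → A}

theorem exists_prod_eq_smul_prod_of_perm
    (hf : Pairwise fun i j => f i * f j = -(f j * f i)) {l₁ l₂ : List ι} (h : l₁.Perm l₂) :
    ∃ c : R, (l₁.map f).prod = c • (l₂.map f).prod := by
  induction h with
  | nil => exact ⟨1, by simp⟩
  | cons x _ ih =>
    obtain ⟨c, hc⟩ := ih
    exact ⟨c, by simp [hc]⟩
  | swap x y l =>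
    obtain rfl | hxy := eq_or_ne x y
    · exact ⟨1, by simp⟩
    · refine ⟨-1, ?_⟩
      simp [← mul_assoc, hf hxy.symm]
  | trans _ _ ih₁ ih₂ =>
    obtain ⟨c₁, hc₁⟩ := ih₁
    obtain ⟨c₂, hc₂⟩ := ih₂
    exact ⟨c₁ * c₂, by rw [hc₁, hc₂, smul_smul]⟩

theorem prod_mul_prod_reverse (q : ι → R) (hq : ∀ i, f i * f i = algebraMap R A (q i))
    (l : List ι) : (l.map f).prod * (l.reverse.map f).prod = algebraMap R A (l.map q).prod := by
  induction l with
  | nil => simp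
  | cons i l ih =>
    simp only [List.map_cons, List.prod_cons, List.reverse_cons, List.map_append,
      List.prod_append, List.map_nil, List.prod_nil, mul_one]
    rw [mul_assoc, ← mul_assoc _ _ (f i), ih, Algebra.commutes, ← mul_assoc, hq, map_mul]

variable [LinearOrder ι]

def sortedProd (f : ι → A) (s : Finset ι) : A :=
  ((s.sort (· ≤ ·)).map f).prod

@[simp]
theorem sortedProd_empty (f : ι → A) : sortedProd f ∅ = 1 := by
  simp [sortedProd]

theorem exists_sortedProd_insert (hf : Pairwise fun i j => f i * f j = -(f j * f i))
    {i : ι} {s : Finset ι} (h : i ∉ s) :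
    ∃ c : R, sortedProd f (insert i s) = c • (f i * sortedProd f s) := by
  simpa [sortedProd] using
    exists_prod_eq_smul_prod_of_perm (R := R) hf (Finset.perm_sort_insert h).symm

theorem exists_mul_sortedProd (hf : Pairwise fun i j => f i * f j = -(f j * f i))
    (q : ι → R) (hq : ∀ i, f i * f i = algebraMap R A (q i)) (i : ι) (s : Finset ι) :
    ∃ c : R, f i * sortedProd f s = c • sortedProd f ({i} ∆ s) := by
  by_cases hi : i ∈ s
  · obtain ⟨c, hc⟩ := exists_sortedProd_insert (R := R) hf (s.notMem_erase i)
    have hs : {i} ∆ s = s.erase i := by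
      conv_lhs => rw [← Finset.insert_erase hi,
        ← Finset.singleton_symmDiff_of_notMem (s.notMem_erase i), symmDiff_symmDiff_cancel_left]
    rw [Finset.insert_erase hi] at hc
    refine ⟨c * q i, ?_⟩
    rw [hc, mul_smul_comm, ← mul_assoc, hq, ← Algebra.smul_def, smul_smul, hs]
  · obtain ⟨c, hc⟩ := exists_prod_eq_smul_prod_of_perm (R := R) hf (Finset.perm_sort_insert hi)
    refine ⟨c, ?_⟩
    simpa [sortedProd, Finset.singleton_symmDiff_of_notMem hi] using hc

theorem exists_sortedProd_mul_sortedProd (hf : Pairwise fun i j => f i * f j = -(f j * f i))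
    (q : ι → R) (hq : ∀ i, f i * f i = algebraMap R A (q i)) (s t : Finset ι) :
    ∃ c : R, sortedProd f s * sortedProd f t = c • sortedProd f (s ∆ t) := by
  classical
  induction s using Finset.induction_on with
  | empty =>
    exact ⟨1, by rw [sortedProd_empty, one_mul, one_smul, ← Finset.bot_eq_empty, bot_symmDiff]⟩
  | insert i s hi ih =>
    obtain ⟨c₁, hc₁⟩ := exists_sortedProd_insert (R := R) hf hi
    obtain ⟨c₂, hc₂⟩ := ih
    obtain ⟨c₃, hc₃⟩ := exists_mul_sortedProd hf q hq i (s ∆ t)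
    refine ⟨c₁ * c₂ * c₃, ?_⟩
    rw [hc₁, smul_mul_assoc, mul_assoc, hc₂, mul_smul_comm, hc₃, smul_smul, smul_smul,
      ← symmDiff_assoc, Finset.singleton_symmDiff_of_notMem hi]

end AnticommutingFamily

theorem LinearMap.BilinForm.isSymm_of_isOrthoᵢ {R M ι : Type*} [CommSemiring R]
    [AddCommMonoid M] [Module R M] {B : LinearMap.BilinForm R M} (v : Module.Basis ι R M)
    (h : B.IsOrthoᵢ v) : B.IsSymm := by
  suffices B = B.flip from ⟨fun x y => LinearMap.congr_fun₂ this x y⟩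
  refine LinearMap.ext_basis v v fun i j => ?_
  change B (v i) (v j) = B (v j) (v i)
  obtain rfl | hij := eq_or_ne i j
  · rfl
  · rw [h hij, h hij.symm]

section Clifford

open AnticommutingFamily

variable {F V : Type*} [Field F] [AddCommGroup V] [Module F V] {Q : QuadraticForm F V}

theorem finrank_cliffordAlgebra [Module.Finite F V] (h2 : (2 : F) ≠ 0) :
    Module.finrank F (CliffordAlgebra Q) = 2 ^ Module.finrank F V := by
  have : Invertible (2 : F) := invertibleOfNonzero h2
  rw [(CliffordAlgebra.equivExterior Q).finrank_eq,
    Module.finrank_eq_card_basis (Module.finBasis F V).ExteriorAlgebra, Fintype.card_finset,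
    Fintype.card_fin]

variable {n : ℕ} {b : Module.Basis (Fin n) F V}

noncomputable def QbarForm (bas : Module.Basis (Finset (Fin n)) F (CliffordAlgebra Q)) :
    LinearMap.BilinForm F (CliffordAlgebra Q) :=
  ((LinearMap.mul F _).compl₂ (cconj Q)).compr₂ (bas.coord ∅)

theorem QbarForm_apply (bas : Module.Basis (Finset (Fin n)) F (CliffordAlgebra Q))
    (x y : CliffordAlgebra Q) : QbarForm bas x y = Qbar bas x y :=
  rfl

@[simp]
theorem eI_empty : eI Q b ∅ = 1 := sortedProd_empty _

@[simp]
theorem eI_singleton (i : Fin n) : eI Q b {i} = ι Q (b i) := by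
  simp [eI]

theorem cconj_eI (s : Finset (Fin n)) :
    cconj Q (eI Q b s) =
      (-1 : F) ^ s.card • ((s.sort (· ≤ ·)).reverse.map fun i => ι Q (b i)).prod := by
  have hl : eI Q b s = (((s.sort (· ≤ ·)).map b).map (ι Q)).prod := by
    rw [List.map_map]; rfl
  change involute (reverse (eI Q b s)) = _
  rw [hl, CliffordAlgebra.reverse_prod_map_ι, ← List.map_reverse,
    CliffordAlgebra.involute_prod_map_ι]
  simp [List.map_reverse, Function.comp_def]

theorem eI_mul_cconj_eI_self (s : Finset (Fin n)) :
    eI Q b s * cconj Q (eI Q b s) = algebraMap F _ ((-1) ^ s.card * ∏ i ∈ s, Q (b i)) := by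
  rw [cconj_eI, mul_smul_comm, eI, prod_mul_prod_reverse _ fun i => ι_sq_scalar Q (b i),
    Algebra.smul_def, ← map_mul, ((s.sort_perm_toList _).map _).prod_eq, Finset.prod_map_toList]

theorem coord_empty_eI {bas : Module.Basis (Finset (Fin n)) F (CliffordAlgebra Q)}
    (hbas : ∀ s, bas s = eI Q b s) (s : Finset (Fin n)) :
    bas.coord ∅ (eI Q b s) = if s = ∅ then 1 else 0 := by
  rw [← hbas, Module.Basis.coord_apply, Module.Basis.repr_self, Finsupp.single_apply]

theorem Qbar_eI_self {bas : Module.Basis (Finset (Fin n)) F (CliffordAlgebra Q)}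
    (hbas : ∀ s, bas s = eI Q b s) (s : Finset (Fin n)) :
    Qbar bas (eI Q b s) (eI Q b s) = (-1) ^ s.card * ∏ i ∈ s, Q (b i) := by
  rw [Qbar, eI_mul_cconj_eI_self, Algebra.algebraMap_eq_smul_one, map_smul,
    ← eI_empty (Q := Q) (b := b), coord_empty_eI hbas, if_pos rfl, smul_eq_mul, mul_one]

variable (hb : Pairwise fun i j => Q.IsOrtho (b i) (b j))
include hb

theorem pairwise_ι_mul_ι_comm :
    Pairwise fun i j => ι Q (b i) * ι Q (b j) = -(ι Q (b j) * ι Q (b i)) :=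
  fun _ _ hij => ι_mul_ι_comm_of_isOrtho (hb hij)

theorem exists_eI_mul_eI (s t : Finset (Fin n)) :
    ∃ c : F, eI Q b s * eI Q b t = c • eI Q b (s ∆ t) :=
  exists_sortedProd_mul_sortedProd (pairwise_ι_mul_ι_comm hb) _ (fun i => ι_sq_scalar Q (b i))
    s t

theorem exists_cconj_eI (s : Finset (Fin n)) : ∃ c : F, cconj Q (eI Q b s) = c • eI Q b s := by
  obtain ⟨c, hc⟩ := exists_prod_eq_smul_prod_of_perm (R := F) (pairwise_ι_mul_ι_comm hb)
    (List.reverse_perm (s.sort (· ≤ ·)))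
  exact ⟨(-1) ^ s.card * c, by rw [cconj_eI, hc, smul_smul]; rfl⟩

theorem span_range_eI : Submodule.span F (Set.range (eI Q b)) = ⊤ := by
  set S := Submodule.span F (Set.range (eI Q b))
  have hmul : S * S ≤ S := by
    rw [Submodule.span_mul_span, Submodule.span_le]
    rintro _ ⟨_, ⟨s, rfl⟩, _, ⟨t, rfl⟩, rfl⟩
    obtain ⟨c, hc⟩ := exists_eI_mul_eI hb s t
    change eI Q b s * eI Q b t ∈ S
    rw [hc]
    exact S.smul_mem c (Submodule.subset_span ⟨_, rfl⟩)
  have hι : ∀ v, ι Q v ∈ S := by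
    intro v
    rw [← b.sum_repr v, map_sum]
    exact S.sum_mem fun i _ => by
      rw [map_smul, ← eI_singleton]
      exact S.smul_mem _ (Submodule.subset_span ⟨_, rfl⟩)
  rw [eq_top_iff]
  rintro x -
  induction x using CliffordAlgebra.induction with
  | algebraMap r =>
    rw [Algebra.algebraMap_eq_smul_one, ← eI_empty (b := b)]
    exact S.smul_mem r (Submodule.subset_span ⟨_, rfl⟩)
  | ι v => exact hι v
  | mul x y hx hy => exact hmul (Submodule.mul_mem_mul hx hy)
  | add x y hx hy => exact S.add_mem hx hy

theorem Qbar_eI_eI_of_ne {bas : Module.Basis (Finset (Fin n)) F (CliffordAlgebra Q)}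
    (hbas : ∀ s, bas s = eI Q b s) {s t : Finset (Fin n)} (h : s ≠ t) :
    Qbar bas (eI Q b s) (eI Q b t) = 0 := by
  obtain ⟨c, hc⟩ := exists_cconj_eI hb t
  obtain ⟨d, hd⟩ := exists_eI_mul_eI hb s t
  rw [Qbar, hc, mul_smul_comm, hd, smul_smul, map_smul, coord_empty_eI hbas,
    if_neg (Finset.symmDiff_eq_empty.not.2 h), smul_zero]

noncomputable def eIBasis (h2 : (2 : F) ≠ 0) :
    Module.Basis (Finset (Fin n)) F (CliffordAlgebra Q) :=
  have : Module.Finite F V := Module.Finite.of_basis b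
  basisOfTopLeSpanOfCardEqFinrank (eI Q b) (span_range_eI hb).ge (by
    rw [finrank_cliffordAlgebra h2, Module.finrank_eq_card_basis b, Fintype.card_finset,
      Fintype.card_fin])

@[simp]
theorem coe_eIBasis (h2 : (2 : F) ≠ 0) : ⇑(eIBasis hb h2) = eI Q b := by
  simp [eIBasis]

end Clifford

theorem stmt5_general {F V : Type*} [Field F] [AddCommGroup V] [Module F V]
    (h2 : (2 : F) ≠ 0)
    (B : LinearMap.BilinForm F V)
    (hnd : ∀ v : V, (∀ w : V, B v w = 0) → v = 0)
    (Qf : QuadraticForm F V) (hQ : ∀ v : V, Qf v = -(B v v))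
    {n : ℕ} (b : Module.Basis (Fin n) F V)
    (hortho : ∀ i j : Fin n, i ≠ j → B (b i) (b j) = 0) :
    ∃ bas : Module.Basis (Finset (Fin n)) F (CliffordAlgebra Qf),
      (∀ s : Finset (Fin n), bas s = eI Qf b s) ∧
      (∀ s t : Finset (Fin n), s ≠ t → Qbar bas (eI Qf b s) (eI Qf b t) = 0) ∧
      (∀ s : Finset (Fin n), Qbar bas (eI Qf b s) (eI Qf b s) ≠ 0) ∧
      Module.finrank F (CliffordAlgebra Qf) = 2 ^ n ∧
      (∀ x y : CliffordAlgebra Qf, Qbar bas x y = Qbar bas y x) ∧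
      (∀ x : CliffordAlgebra Qf, (∀ y, Qbar bas x y = 0) → x = 0) := by
  have hb : Pairwise fun i j => Qf.IsOrtho (b i) (b j) := fun i j hij => by
    change Qf.IsOrtho (b i) (b j)
    rw [QuadraticMap.isOrtho_def, hQ, hQ, hQ]
    simp only [map_add, LinearMap.add_apply, hortho i j hij, hortho j i hij.symm]
    ring
  have hQb : ∀ i, Qf (b i) ≠ 0 := fun i => by
    rw [hQ, neg_ne_zero]
    exact LinearMap.IsOrthoᵢ.not_isOrtho_basis_self_of_separatingLeft
      (fun i j hij => hortho i j hij) hnd i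
  let bas := eIBasis hb h2
  have hbas : ∀ s, bas s = eI Qf b s := fun s => by simp [bas]
  have hdiag : ∀ s, Qbar bas (eI Qf b s) (eI Qf b s) ≠ 0 := fun s => by
    rw [Qbar_eI_self hbas]
    exact mul_ne_zero (pow_ne_zero _ (neg_ne_zero.2 one_ne_zero))
      (Finset.prod_ne_zero_iff.2 fun i _ => hQb i)
  have hO : (QbarForm bas).IsOrthoᵢ bas := fun s t hst => by
    change QbarForm bas (bas s) (bas t) = 0
    simpa only [QbarForm_apply, hbas] using Qbar_eI_eI_of_ne hb hbas hst
  have hdiag' : ∀ s, QbarForm bas (bas s) (bas s) ≠ 0 := fun s => by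
    simpa only [QbarForm_apply, hbas] using hdiag s
  refine ⟨bas, hbas, fun s t => Qbar_eI_eI_of_ne hb hbas, hdiag, ?_,
    (LinearMap.BilinForm.isSymm_of_isOrthoᵢ bas hO).eq,
    hO.separatingLeft_of_not_isOrtho_basis_self bas hdiag'⟩
  rw [Module.finrank_eq_card_basis bas, Fintype.card_finset, Fintype.card_fin]

theorem stmt5 {F V : Type*} [Field F] [AddCommGroup V] [Module F V]
    [FiniteDimensional F V] (h2 : (2 : F) ≠ 0)
    (B : LinearMap.BilinForm F V)
    (hsymm : ∀ v w : V, B v w = B w v)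
    (hnd : ∀ v : V, (∀ w : V, B v w = 0) → v = 0)
    (Qf : QuadraticForm F V) (hQ : ∀ v : V, Qf v = -(B v v))
    {n : ℕ} (b : Module.Basis (Fin n) F V)
    (hortho : ∀ i j : Fin n, i ≠ j → B (b i) (b j) = 0) :
    ∃ bas : Module.Basis (Finset (Fin n)) F (CliffordAlgebra Qf),
      (∀ s : Finset (Fin n), bas s = eI Qf b s) ∧
      (∀ s t : Finset (Fin n), s ≠ t → Qbar bas (eI Qf b s) (eI Qf b t) = 0) ∧
      (∀ s : Finset (Fin n), Qbar bas (eI Qf b s) (eI Qf b s) ≠ 0) ∧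
      Module.finrank F (CliffordAlgebra Qf) = 2 ^ n ∧
      (∀ x y : CliffordAlgebra Qf, Qbar bas x y = Qbar bas y x) ∧
      (∀ x : CliffordAlgebra Qf, (∀ y, Qbar bas x y = 0) → x = 0) :=
  stmt5_general h2 B hnd Qf hQ b hortho
end

section
/- The center of the Lie algebra G = {ξ ∈ Cl(V,Q) : c(ξ) = -ξ} (with bracket [x,y] = xy - yx) equals G ∩ Z(Cl(V,Q)), the intersection of G with the center of the Clifford algebra. -/
open CliffordAlgebra

theorem CliffordAlgebra.mem_center_iff_forall_commute_ι {R M : Type*} [CommRing R]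
    [AddCommGroup M] [Module R M] {Q : QuadraticForm R M} {x : CliffordAlgebra Q} :
    x ∈ Subalgebra.center R (CliffordAlgebra Q) ↔ ∀ m, Commute (ι Q m) x := by
  refine ⟨fun hx m => Subalgebra.mem_center_iff.mp hx _, fun h => ?_⟩
  refine Subalgebra.mem_center_iff.mpr fun b => ?_
  have hb : b ∈ Algebra.adjoin R (Set.range (ι Q)) := adjoin_range_ι (Q := Q) ▸ Algebra.mem_top
  exact (Algebra.commute_of_mem_adjoin_of_forall_mem_commute hb
    (by rintro _ ⟨m, rfl⟩; exact (h m).symm)).symm.eq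

theorem cconj_ι {F V : Type*} [Field F] [AddCommGroup V] [Module F V]
    (Qf : QuadraticForm F V) (v : V) : cconj Qf (ι Qf v) = -ι Qf v := by
  simp [cconj]

theorem stmt15_general {F V : Type*} [Field F] [AddCommGroup V] [Module F V]
    (Qf : QuadraticForm F V) :
    ∀ ξ : CliffordAlgebra Qf,
      (cconj Qf ξ = -ξ ∧
        ∀ η : CliffordAlgebra Qf, cconj Qf η = -η → ξ * η - η * ξ = 0) ↔
      (cconj Qf ξ = -ξ ∧ ξ ∈ Subalgebra.center F (CliffordAlgebra Qf)) := by
  intro ξ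
  refine and_congr_right fun _ => ⟨fun hcomm => ?_, fun hξ η _ => ?_⟩
  · exact mem_center_iff_forall_commute_ι.mpr fun v =>
      (sub_eq_zero.mp (hcomm _ (cconj_ι Qf v))).symm
  · exact sub_eq_zero.mpr (Subalgebra.mem_center_iff.mp hξ η).symm

theorem stmt15 {F V : Type*} [Field F] [AddCommGroup V] [Module F V]
    [FiniteDimensional F V] (h2 : (2 : F) ≠ 0)
    (B : LinearMap.BilinForm F V)
    (hsymm : ∀ v w : V, B v w = B w v)
    (hnd : ∀ v : V, (∀ w : V, B v w = 0) → v = 0)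
    (Qf : QuadraticForm F V) (hQ : ∀ v : V, Qf v = -(B v v)) :
    ∀ ξ : CliffordAlgebra Qf,
      (cconj Qf ξ = -ξ ∧
        ∀ η : CliffordAlgebra Qf, cconj Qf η = -η → ξ * η - η * ξ = 0) ↔
      (cconj Qf ξ = -ξ ∧ ξ ∈ Subalgebra.center F (CliffordAlgebra Qf)) :=
  stmt15_general Qf
end
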